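/- Let A > B > 0, Δ = A - B, and ā, b̄ > 0. For every t > 0, the function p ↦ h(p,t) = -p²·Δ/t + p·(Δ - ā(1 + B/t) - b̄(1 + A/t))/t + b̄(1 + A/t)/t has exactly one root p*_t in (0,1), h(p,t) > 0 for 0 ≤ p < p*_t, and h(p,t) < 0 for p*_t < p ≤ 1. Moreover p*_t → p* as t → ∞, where p* = (Δ - ā - b̄ + √((Δ - ā - b̄)² + 4Δb̄))/(2Δ). -/

import Mathlib

/-!
For fixed `t > 0`, `t * h(p,t)` is the downward quadratic `-Δ p² + c p + d` with
`c = Δ - ā(1 + B/t) - b̄(1 + A/t)` and `d = b̄(1 + A/t) > 0`. Since `d > 0` its roots have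
opposite signs, so on `p ≥ 0` the sign of `h` is that of `p*_t - p`, where `p*_t` is the
larger root; `p*_t < 1` because the quadratic is `-ā(1 + B/t) < 0` at `p = 1`. As `t → ∞` the
coefficients tend to `(Δ, Δ - ā - b̄, b̄)`, and the root formula is continuous in them.
-/

open Filter Topology

/-- The larger root of `-a p² + c p + d` when `a > 0`. -/
noncomputable def quadRoot (a c d : ℝ) : ℝ :=
  (c + Real.sqrt (c ^ 2 + 4 * a * d)) / (2 * a)

section QuadRoot

variable {a c d : ℝ}

lemma quadratic_eq_mul (ha : 0 < a) (hd : 0 < d) (p : ℝ) :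
    -a * p ^ 2 + c * p + d =
      (quadRoot a c d - p) * (a * p + (Real.sqrt (c ^ 2 + 4 * a * d) - c) / 2) := by
  unfold quadRoot
  set s := Real.sqrt (c ^ 2 + 4 * a * d)
  have hs : s ^ 2 = c ^ 2 + 4 * a * d := Real.sq_sqrt (by positivity)
  field_simp
  linear_combination -hs

lemma abs_lt_sqrt_discrim (ha : 0 < a) (hd : 0 < d) : |c| < Real.sqrt (c ^ 2 + 4 * a * d) :=
  Real.lt_sqrt_of_sq_lt (by nlinarith [mul_pos ha hd, sq_abs c])

lemma quadRoot_cofactor_pos (ha : 0 < a) (hd : 0 < d) {p : ℝ} (hp : 0 ≤ p) :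
    0 < a * p + (Real.sqrt (c ^ 2 + 4 * a * d) - c) / 2 := by
  have := (le_abs_self c).trans_lt (abs_lt_sqrt_discrim ha hd)
  have := mul_nonneg ha.le hp
  linarith

lemma quadRoot_pos (ha : 0 < a) (hd : 0 < d) : 0 < quadRoot a c d := by
  have := neg_le_abs c |>.trans_lt (abs_lt_sqrt_discrim ha hd)
  exact div_pos (by linarith) (by positivity)

lemma quadRoot_lt_one (ha : 0 < a) (hd : 0 < d) (hcd : c + d < a) : quadRoot a c d < 1 := by
  unfold quadRoot
  rw [div_lt_one (by positivity), ← lt_sub_iff_add_lt']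
  exact Real.sqrt_lt' (by linarith) |>.2 (by nlinarith)

lemma quadratic_pos_iff_lt_quadRoot (ha : 0 < a) (hd : 0 < d) {p : ℝ} (hp : 0 ≤ p) :
    0 < -a * p ^ 2 + c * p + d ↔ p < quadRoot a c d := by
  rw [quadratic_eq_mul ha hd, mul_pos_iff_of_pos_right (quadRoot_cofactor_pos ha hd hp), sub_pos]

lemma quadratic_neg_iff_quadRoot_lt (ha : 0 < a) (hd : 0 < d) {p : ℝ} (hp : 0 ≤ p) :
    -a * p ^ 2 + c * p + d < 0 ↔ quadRoot a c d < p := by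
  rw [quadratic_eq_mul ha hd, ← neg_pos, ← neg_mul,
    mul_pos_iff_of_pos_right (quadRoot_cofactor_pos ha hd hp), neg_pos, sub_neg]

lemma quadratic_eq_zero_iff_eq_quadRoot (ha : 0 < a) (hd : 0 < d) {p : ℝ} (hp : 0 ≤ p) :
    -a * p ^ 2 + c * p + d = 0 ↔ p = quadRoot a c d := by
  rw [quadratic_eq_mul ha hd, mul_eq_zero, sub_eq_zero, eq_comm,
    or_iff_left (quadRoot_cofactor_pos ha hd hp).ne']

end QuadRoot

lemma Filter.Tendsto.quadRoot {α : Type*} {l : Filter α} {a c₀ d₀ : ℝ} {c d : α → ℝ}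
    (hc : Tendsto c l (𝓝 c₀)) (hd : Tendsto d l (𝓝 d₀)) :
    Tendsto (fun x => quadRoot a (c x) (d x)) l (𝓝 (quadRoot a c₀ d₀)) :=
  (hc.add ((hc.pow 2).add (hd.const_mul _)).sqrt).div_const _

lemma tendsto_one_add_div_atTop (x : ℝ) : Tendsto (fun t : ℝ => 1 + x / t) atTop (𝓝 1) := by
  simpa using (tendsto_const_nhds (x := (1 : ℝ))).add
    ((tendsto_const_nhds (x := x)).div_atTop tendsto_id)

/-- For `ā, b̄ > 0` the drift `p ↦ h(p,t)` has exactly one root `p*_t` in `(0,1)`,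
is positive to its left and negative to its right on `[0,1]`, and `p*_t → p*` as
`t → ∞`, with `p* = (Δ - ā - b̄ + √((Δ - ā - b̄)² + 4Δb̄))/(2Δ)`. -/
theorem stmt_8 (A B abar bbar : ℝ) (hB : 0 < B) (hAB : B < A)
    (ha : 0 < abar) (hb : 0 < bbar) :
    let Δ : ℝ := A - B
    let h : ℝ → ℝ → ℝ := fun p t =>
      -p ^ 2 * Δ / t + p * (Δ - abar * (1 + B / t) - bbar * (1 + A / t)) / t +
        bbar * (1 + A / t) / t
    let pstar : ℝ := (Δ - abar - bbar + Real.sqrt ((Δ - abar - bbar) ^ 2 + 4 * Δ * bbar)) / (2 * Δ)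
    ∃ proot : ℝ → ℝ,
      (∀ t > (0:ℝ),
        proot t ∈ Set.Ioo (0:ℝ) 1 ∧ h (proot t) t = 0 ∧
        (∀ p, 0 ≤ p → p < proot t → 0 < h p t) ∧
        (∀ p, proot t < p → p ≤ 1 → h p t < 0) ∧
        (∀ p ∈ Set.Ioo (0:ℝ) 1, h p t = 0 → p = proot t)) ∧
      Tendsto proot atTop (nhds pstar) := by
  intro Δ h pstar
  have hΔ : 0 < Δ := sub_pos.mpr hAB
  set c : ℝ → ℝ := fun t => Δ - abar * (1 + B / t) - bbar * (1 + A / t)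
  set d : ℝ → ℝ := fun t => bbar * (1 + A / t)
  have hh : ∀ p t, h p t = (-Δ * p ^ 2 + c t * p + d t) / t := fun p t => by ring
  refine ⟨fun t => quadRoot Δ (c t) (d t), fun t ht => ?_, ?_⟩
  · have hA : 0 < A := hB.trans hAB
    have hd : 0 < d t := by positivity
    have hcd : c t + d t < Δ := by
      have : 0 < abar * (1 + B / t) := by positivity
      linarith
    have hr := quadRoot_pos (c := c t) hΔ hd
    simp only [hh]
    refine ⟨⟨hr, quadRoot_lt_one hΔ hd hcd⟩, ?_, fun p hp0 hp => ?_, fun p hp _ => ?_, ?_⟩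
    · rw [(quadratic_eq_zero_iff_eq_quadRoot hΔ hd hr.le).2 rfl, zero_div]
    · exact div_pos ((quadratic_pos_iff_lt_quadRoot hΔ hd hp0).2 hp) ht
    · exact div_neg_of_neg_of_pos
        ((quadratic_neg_iff_quadRoot_lt hΔ hd (hr.trans hp).le).2 hp) ht
    · rintro p ⟨hp0, -⟩ hp
      exact (quadratic_eq_zero_iff_eq_quadRoot hΔ hd hp0.le).1
        ((div_eq_zero_iff.1 hp).resolve_right ht.ne')
  · have hc : Tendsto c atTop (𝓝 (Δ - abar - bbar)) := by
      simpa using (tendsto_const_nhds.sub ((tendsto_one_add_div_atTop B).const_mul abar)).sub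
        ((tendsto_one_add_div_atTop A).const_mul bbar)
    have hd : Tendsto d atTop (𝓝 bbar) := by
      simpa using (tendsto_one_add_div_atTop A).const_mul bbar
    exact hc.quadRoot hd
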